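/- arXiv:1210.5254 — 3 statements merged into one kernel-verified Lean document; each statement's English description precedes it below -/
import Mathlib

section
/- For a connected simple graph G, the kernel of the map ∂: Z^E → Z^V given by ∂(e) = v1 + v2 (sum of endpoints) is a free abelian group of rank p_1(G) if G is bipartite, and of rank p_1(G) − 1 if G contains an odd cycle, where p_1(G) = |E| − |V| + 1 is the cyclomatic number. -/
open Module Matrix

section IncidenceAux

variable {V : Type} [Fintype V] [DecidableEq V]

set_option linter.unusedSectionVars false

/-- The unsigned incidence matrix of `G` over `ℚ`. -/
def incQ (G : SimpleGraph V) [Fintype G.edgeSet] : Matrix V G.edgeSet ℚ :=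
  Matrix.of fun v (e : G.edgeSet) => if v ∈ (e : Sym2 V) then (1 : ℚ) else 0

/-- The boundary map over `ℚ`. -/
noncomputable def bdQ (G : SimpleGraph V) [Fintype G.edgeSet] :
    (G.edgeSet → ℚ) →ₗ[ℚ] (V → ℚ) := (incQ G).mulVecLin

lemma bdQ_apply (G : SimpleGraph V) [Fintype G.edgeSet] (f : G.edgeSet → ℚ) (v : V) :
    bdQ G f v = ∑ e : G.edgeSet, if v ∈ (e : Sym2 V) then f e else 0 := by
  simp [bdQ, incQ, Matrix.mulVecLin_apply, Matrix.mulVec, dotProduct, ite_mul]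

lemma sum_mem_sym2 {u w : V} (hne : u ≠ w) (x : V → ℚ) :
    ∑ v : V, (if v ∈ (s(u, w) : Sym2 V) then x v else 0) = x u + x w := by
  have h1 : ∀ v : V, (v ∈ (s(u, w) : Sym2 V)) = (v ∈ ({u, w} : Finset V)) := by
    intro v; simp [Sym2.mem_iff]
  simp_rw [h1]
  rw [Finset.sum_ite_mem, Finset.univ_inter, Finset.sum_pair hne]

lemma mulVecLin_transpose_apply (G : SimpleGraph V) [Fintype G.edgeSet] (x : V → ℚ)
    (e : G.edgeSet) :
    (incQ G)ᵀ.mulVecLin x e = ∑ v : V, (if v ∈ (e : Sym2 V) then x v else 0) := by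
  simp [incQ, Matrix.mulVecLin_apply, Matrix.vecMul, Matrix.mulVec, dotProduct,
    Matrix.transpose_apply, ite_mul, mul_ite, mul_one, mul_zero]

lemma mem_ker_transpose_iff (G : SimpleGraph V) [Fintype G.edgeSet] (x : V → ℚ) :
    x ∈ LinearMap.ker (incQ G)ᵀ.mulVecLin ↔ ∀ u w, G.Adj u w → x u + x w = 0 := by
  constructor
  · intro hx u w huw
    have h := congrFun (LinearMap.mem_ker.mp hx) ⟨s(u, w), huw⟩
    rwa [mulVecLin_transpose_apply, sum_mem_sym2 huw.ne] at h
  · intro h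
    apply LinearMap.mem_ker.mpr
    funext e
    obtain ⟨s, hs⟩ := e
    induction s using Sym2.ind with
    | _ u w =>
      have hadj : G.Adj u w := hs
      rw [mulVecLin_transpose_apply, sum_mem_sym2 hadj.ne, h u w hadj]
      rfl

lemma walk_sign {G : SimpleGraph V} {x : V → ℚ} (h : ∀ u w, G.Adj u w → x u + x w = 0)
    {u v : V} (p : G.Walk u v) : x v = x u ∨ x v = -x u := by
  induction p with
  | nil => exact Or.inl rfl
  | @cons a b c hadj p ih =>
    have h1 : x b = - x a := by linarith [h a b hadj]
    rcases ih with h2 | h2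
    · right; rw [h2, h1]
    · left; rw [h2, h1]; ring

lemma ker_transpose_eq_bot (G : SimpleGraph V) [Fintype G.edgeSet] (hconn : G.Connected)
    (hnb : ¬ ∃ c : V → Bool, ∀ u w, G.Adj u w → c u ≠ c w) :
    LinearMap.ker (incQ G)ᵀ.mulVecLin = ⊥ := by
  apply (Submodule.eq_bot_iff _).mpr
  intro x hx
  rw [mem_ker_transpose_iff] at hx
  by_contra hx0
  obtain ⟨v0, hv0⟩ : ∃ v, x v ≠ 0 := by
    by_contra h'; push_neg at h'; exact hx0 (funext h')
  have hsign : ∀ v, x v = x v0 ∨ x v = -x v0 := fun v => walk_sign hx ((hconn v0 v).some)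
  refine hnb ⟨fun v => decide (x v = x v0), ?_⟩
  intro u w hadj
  have huv : x u + x w = 0 := hx u w hadj
  simp only [ne_eq, decide_eq_decide]
  intro hcc
  rcases hsign u with h1 | h1 <;> rcases hsign w with h2 | h2
  · exact hv0 (by linarith)
  · have : x w = x v0 := hcc.mp h1
    exact hv0 (by linarith)
  · have : x u = x v0 := hcc.mpr h2
    exact hv0 (by linarith)
  · exact hv0 (by linarith)

lemma ker_transpose_eq_span (G : SimpleGraph V) [Fintype G.edgeSet] (hconn : G.Connected)
    {c : V → Bool} (hc : ∀ u w, G.Adj u w → c u ≠ c w) :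
    LinearMap.ker (incQ G)ᵀ.mulVecLin
      = Submodule.span ℚ {(fun v => if c v then (1 : ℚ) else -1)} := by
  set y : V → ℚ := fun v => if c v then (1 : ℚ) else -1 with hy
  have hyflip : ∀ u w, G.Adj u w → y w = - y u := by
    intro u w hadj
    have := hc u w hadj
    cases hcu : c u <;> cases hcw : c w <;> simp [hcu, hcw] at this ⊢ <;> simp [y, hcu, hcw]
  apply le_antisymm
  · intro x hx
    rw [mem_ker_transpose_iff] at hx
    obtain ⟨v0⟩ := hconn.nonempty
    set k : ℚ := x v0 * y v0 with hk
    have hy2 : ∀ v, y v = 1 ∨ y v = -1 := by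
      intro v; by_cases h : c v <;> simp [y, h]
    have key : ∀ u v (p : G.Walk u v), x u = k * y u → x v = k * y v := by
      intro u v p
      induction p with
      | nil => exact id
      | @cons a b c' hadj p ih =>
        intro hu
        apply ih
        have h1 : x a + x b = 0 := hx a b hadj
        rw [hyflip a b hadj]
        linarith [hu]
    have hx0 : x v0 = k * y v0 := by
      rcases hy2 v0 with h | h <;> rw [hk, h] <;> ring
    have hxy : x = k • y := by
      funext v
      rw [Pi.smul_apply, smul_eq_mul]
      exact key v0 v ((hconn v0 v).some) hx0
    rw [hxy]
    exact Submodule.smul_mem _ _ (Submodule.mem_span_singleton_self y)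
  · rw [Submodule.span_le, Set.singleton_subset_iff, SetLike.mem_coe, mem_ker_transpose_iff]
    intro u w hadj
    rw [hyflip u w hadj]; ring

lemma finrank_ker_transfer (G : SimpleGraph V) [Fintype G.edgeSet]
    (bd : (G.edgeSet → ℤ) →ₗ[ℤ] (V → ℤ))
    (hbd : ∀ f v, bd f v = ∑ e : G.edgeSet, if v ∈ (e : Sym2 V) then f e else 0) :
    finrank ℤ (LinearMap.ker bd) = finrank ℚ (LinearMap.ker (bdQ G)) := by
  classical
  set j : (G.edgeSet → ℤ) → (G.edgeSet → ℚ) := fun f e => ((f e : ℤ) : ℚ) with hj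
  have hcomm : ∀ f : G.edgeSet → ℤ, (fun v => ((bd f v : ℤ) : ℚ)) = bdQ G (j f) := by
    intro f
    funext v
    rw [hbd, bdQ_apply]
    push_cast [apply_ite (fun z : ℤ => (z : ℚ))]
    rfl
  have hker : ∀ x : G.edgeSet → ℤ, bd x = 0 → bdQ G (j x) = 0 := by
    intro x hx
    rw [← hcomm, hx]
    funext v; simp
  let F : LinearMap.ker bd →ₗ[ℤ] LinearMap.ker (bdQ G) :=
    { toFun := fun x => ⟨j x.1, LinearMap.mem_ker.mpr (hker x.1 (LinearMap.mem_ker.mp x.2))⟩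
      map_add' := by intro a b; ext e; simp [hj]
      map_smul' := by intro m a; ext e; simp [hj] }
  have hFinj : Function.Injective F := by
    intro a b hab
    ext e
    have h := congrFun (Subtype.ext_iff.mp hab) e
    simp only [F, hj, LinearMap.coe_mk, AddHom.coe_mk] at h
    exact_mod_cast h
  let b := Module.Free.chooseBasis ℤ (LinearMap.ker bd)
  set ι := Module.Free.ChooseBasisIndex ℤ (LinearMap.ker bd)
  set w : ι → LinearMap.ker (bdQ G) := fun i => F (b i) with hw
  have hli : LinearIndependent ℚ w := by
    rw [← LinearIndependent.iff_fractionRing (R := ℤ) (K := ℚ)]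
    exact b.linearIndependent.map' F (LinearMap.ker_eq_bot.mpr hFinj)
  have hspan : Submodule.span ℚ (Set.range w) = ⊤ := by
    rw [Submodule.eq_top_iff']
    intro z
    set d : ℕ := ∏ e : G.edgeSet, (z.1 e).den with hd
    have hdvd : ∀ e : G.edgeSet, ((z.1 e).den : ℕ) ∣ d :=
      fun e => Finset.dvd_prod_of_mem _ (Finset.mem_univ e)
    have hdne : (d : ℚ) ≠ 0 := by
      have : d ≠ 0 := Finset.prod_ne_zero_iff.mpr fun e _ => (z.1 e).den_nz
      exact_mod_cast this
    set x : G.edgeSet → ℤ := fun e => (z.1 e).num * ((d / (z.1 e).den : ℕ) : ℤ) with hx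
    have hxval : j x = (d : ℚ) • z.1 := by
      funext e
      have h1 : (d : ℚ) = ((z.1 e).den : ℚ) * ((d / (z.1 e).den : ℕ) : ℚ) := by
        rw [← Nat.cast_mul, Nat.mul_div_cancel' (hdvd e)]
      simp only [hj, hx, Pi.smul_apply, smul_eq_mul]
      rw [Int.cast_mul, Int.cast_natCast, h1, ← Rat.mul_den_eq_num (z.1 e)]
      ring
    have hxker : bd x = 0 := by
      have h2 : (fun v => ((bd x v : ℤ) : ℚ)) = (0 : V → ℚ) := by
        rw [hcomm, hxval, _root_.map_smul]
        have : bdQ G z.1 = 0 := LinearMap.mem_ker.mp z.2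
        rw [this, smul_zero]
      funext v
      have h3 := congrFun h2 v
      simp only [Pi.zero_apply] at h3 ⊢
      exact_mod_cast h3
    have hmem : F ⟨x, LinearMap.mem_ker.mpr hxker⟩ = (d : ℚ) • z := by
      ext e
      exact congrFun hxval e
    have hsub : (F ⟨x, LinearMap.mem_ker.mpr hxker⟩ : LinearMap.ker (bdQ G))
        ∈ Submodule.span ℚ (Set.range w) := by
      have h3 : (⟨x, LinearMap.mem_ker.mpr hxker⟩ : LinearMap.ker bd)
          ∈ Submodule.span ℤ (Set.range b) := by
        rw [b.span_eq]; trivial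
      have h4 : F ⟨x, LinearMap.mem_ker.mpr hxker⟩ ∈ Submodule.span ℤ (Set.range w) := by
        have := Submodule.mem_map_of_mem (f := F) h3
        rw [Submodule.map_span, ← Set.range_comp] at this
        exact this
      have h5 : (Submodule.span ℤ (Set.range w) : Set (LinearMap.ker (bdQ G)))
          ⊆ Submodule.span ℚ (Set.range w) := Submodule.span_subset_span ℤ ℚ _
      exact h5 h4
    have hzz : z = (d : ℚ)⁻¹ • ((d : ℚ) • z) := by
      rw [smul_smul, inv_mul_cancel₀ hdne, one_smul]
    rw [hzz, ← hmem]
    exact Submodule.smul_mem _ _ hsub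
  have hbasis : finrank ℚ (LinearMap.ker (bdQ G)) = Fintype.card ι :=
    finrank_eq_card_basis (Basis.mk hli (by rw [hspan]))
  rw [hbasis, finrank_eq_card_chooseBasisIndex]

end IncidenceAux

/-- For a connected simple graph `G`, the kernel of `bd : ℤ^E → ℤ^V`,
`bd(e) = v₁ + v₂` (sum of endpoints), is free abelian of rank `p₁(G) = |E| - |V| + 1`
if `G` is bipartite, and of rank `p₁(G) - 1` if `G` has an odd cycle. The rank equations
are stated additively to avoid natural subtraction. -/
theorem stmt_1 {V : Type} [Fintype V] [DecidableEq V] (G : SimpleGraph V)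
    [Fintype G.edgeSet] (hconn : G.Connected)
    (bd : (G.edgeSet → ℤ) →ₗ[ℤ] (V → ℤ))
    (hbd : ∀ f v, bd f v = ∑ e : G.edgeSet, if v ∈ (e : Sym2 V) then f e else 0) :
    Module.Free ℤ (LinearMap.ker bd) ∧
    ((∃ c : V → Bool, ∀ u w, G.Adj u w → c u ≠ c w) →
      Module.finrank ℤ (LinearMap.ker bd) + Fintype.card V
        = Fintype.card G.edgeSet + 1) ∧
    ((¬ ∃ c : V → Bool, ∀ u w, G.Adj u w → c u ≠ c w) →
      Module.finrank ℤ (LinearMap.ker bd) + Fintype.card V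
        = Fintype.card G.edgeSet) := by
  have htrans : Module.finrank ℤ (LinearMap.ker bd)
      = Module.finrank ℚ (LinearMap.ker (bdQ G)) := finrank_ker_transfer G bd hbd
  have hrn1 : Module.finrank ℚ (LinearMap.range (bdQ G))
      + Module.finrank ℚ (LinearMap.ker (bdQ G)) = Fintype.card G.edgeSet := by
    rw [LinearMap.finrank_range_add_finrank_ker]
    exact Module.finrank_fintype_fun_eq_card ℚ
  have hrn2 : Module.finrank ℚ (LinearMap.range (incQ G)ᵀ.mulVecLin)
      + Module.finrank ℚ (LinearMap.ker (incQ G)ᵀ.mulVecLin) = Fintype.card V := by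
    rw [LinearMap.finrank_range_add_finrank_ker]
    exact Module.finrank_fintype_fun_eq_card ℚ
  have hrk : Module.finrank ℚ (LinearMap.range (bdQ G))
      = Module.finrank ℚ (LinearMap.range (incQ G)ᵀ.mulVecLin) :=
    (Matrix.rank_transpose (incQ G)).symm
  refine ⟨inferInstance, ?_, ?_⟩
  · rintro ⟨c, hc⟩
    have hker1 : Module.finrank ℚ (LinearMap.ker (incQ G)ᵀ.mulVecLin) = 1 := by
      rw [ker_transpose_eq_span G hconn hc]
      apply finrank_span_singleton
      obtain ⟨v0⟩ := hconn.nonempty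
      intro h0
      have := congrFun h0 v0
      by_cases h : c v0 <;> simp [h] at this
    omega
  · intro hnb
    have hker0 : Module.finrank ℚ (LinearMap.ker (incQ G)ᵀ.mulVecLin) = 0 := by
      rw [ker_transpose_eq_bot G hconn hnb]
      exact finrank_bot ℚ _
    omega
end

section
/- For a finite graph G, the Kauffman bracket [G]_{(μ,A,B)} and the Tutte polynomial χ(G;x,y) are related by [G]_{(μ,A,B)} = μ^{p_0(G)} A^{p_1(G)} B^{|E(G)| − p_1(G)} χ(G; x, y), where x = (B + μA)/B and y = (A + μB)/A. -/
open scoped Classical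

/-- A finite multigraph (loops and multiple edges allowed). -/
structure MGraph where
  V : Type
  E : Type
  fV : Fintype V
  fE : Fintype E
  dE : DecidableEq E
  ends : E → Sym2 V

attribute [instance] MGraph.fV MGraph.fE MGraph.dE

namespace MGraph

/-- Number of connected components `p₀([G:s])` of the spanning subgraph with edges `s`. -/
noncomputable def p0 (G : MGraph) (s : Finset G.E) : ℕ :=
  Nat.card (Quot fun v w : G.V => ∃ e ∈ s, G.ends e = s(v, w))

/-- Cyclomatic number `p₁([G:s]) = |s| - |V| + p₀([G:s])`. -/
noncomputable def p1 (G : MGraph) (s : Finset G.E) : ℕ :=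
  s.card + G.p0 s - Nat.card G.V

/-- The Kauffman bracket of a graph, via the state sum
`[G] = Σ_{s ⊆ E} μ^{p₀([G:s]) + p₁([G:s])} A^{|E|-|s|} B^{|s|}`. -/
noncomputable def kb {K : Type} [Field K] (G : MGraph) (μ A B : K) : K :=
  ∑ s : Finset G.E,
    μ ^ (G.p0 s + G.p1 s) * A ^ (Fintype.card G.E - s.card) * B ^ s.card

/-- The Tutte polynomial `χ(G;x,y) = Σ_{s ⊆ E} (x-1)^{r(E)-r(s)} (y-1)^{|s|-r(s)}`,
where `r(s) = |V| - p₀([G:s])`; note `r(E)-r(s) = p₀(s) - p₀(E)` and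
`|s| - r(s) = p₁([G:s])`. -/
noncomputable def tutte {K : Type} [Field K] (G : MGraph) (x y : K) : K :=
  ∑ s : Finset G.E,
    (x - 1) ^ (G.p0 s - G.p0 Finset.univ) * (y - 1) ^ G.p1 s

end MGraph

/-! Both sides are sums over edge sets `s`, and they agree term by term. With the rank
`r(s) = |V| - p₀(s)` and the nullity `p₁(s) = |s| - r(s)`, the bracket weight
`μ^{p₀(s)+p₁(s)} A^{|E|-|s|} B^{|s|}` factors as `μ^{p₀(E)} A^{p₁(E)} B^{r(E)}` times
`(μA/B)^{r(E)-r(s)} (μB/A)^{p₁(s)}`, which is the Tutte weight at `x - 1 = μA/B`, `y - 1 = μB/A`.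
The only graph theory needed is `p₀(E) ≤ p₀(s) ≤ |V| ≤ |s| + p₀(s)`, which makes the truncated
subtractions in the exponents honest; the last inequality holds because adding an edge merges
at most two components into one. -/
theorem Nat.card_le_card_add_one_of_injOn {α β : Type*} [Finite α] [Finite β] (f : α → β)
    (a₀ : α) (hf : Set.InjOn f (Set.univ \ {a₀})) : Nat.card α ≤ Nat.card β + 1 :=
  calc Nat.card α = (Set.univ \ {a₀}).ncard + 1 := by
        rw [Set.ncard_sdiff_singleton_add_one (Set.mem_univ a₀), Set.ncard_univ]
    _ ≤ Nat.card β + 1 := by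
        gcongr
        exact (Set.ncard_le_ncard_of_injOn f (fun _ _ => Set.mem_univ _) hf).trans_eq
          (Set.ncard_univ β)

namespace Quot

variable {α : Type*} [Finite α]

theorem card_le (r : α → α → Prop) : Nat.card (Quot r) ≤ Nat.card α :=
  Nat.card_le_card_of_surjective _ Quot.mk_surjective

theorem card_le_card_of_le {r r' : α → α → Prop} (h : r ≤ r') :
    Nat.card (Quot r') ≤ Nat.card (Quot r) :=
  Nat.card_le_card_of_surjective _ (Quot.map_surjective (f := id) h Function.surjective_id)

theorem card_eq_of_forall_not {r : α → α → Prop} (h : ∀ a b, ¬ r a b) :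
    Nat.card (Quot r) = Nat.card α := by
  refine le_antisymm (card_le r) (Nat.card_le_card_of_injective (Quot.mk r) fun a b hab => ?_)
  exact (Equivalence.eqvGen_iff eq_equivalence).1
    (Relation.EqvGen.mono (fun a b hr => (h a b hr).elim) _ _ (Quot.eqvGen_exact hab))

theorem card_le_card_or_sym2_add_one (r : α → α → Prop) (z : Sym2 α) :
    Nat.card (Quot r) ≤ Nat.card (Quot fun v w => z = s(v, w) ∨ r v w) + 1 := by
  induction z using Sym2.ind with | _ a b =>
  set r' := fun v w => s(a, b) = s(v, w) ∨ r v w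
  let q := Quot.mk r
  have hr' : ∀ x y, Relation.EqvGen r' x y →
      q x = q y ∨ (q x ∈ ({q a, q b} : Set _) ∧ q y ∈ ({q a, q b} : Set _)) := by
    intro x y h
    induction h with
    | rel x y h =>
      rcases h with h | h
      · rcases Sym2.eq_iff.1 h with ⟨rfl, rfl⟩ | ⟨rfl, rfl⟩ <;> simp
      · exact Or.inl (Quot.sound h)
    | refl => exact Or.inl rfl
    | symm _ _ _ ih => grind
    | trans _ _ _ _ _ ih₁ ih₂ => grind
  refine Nat.card_le_card_add_one_of_injOn (Quot.map id fun v w h => Or.inr h) (q b) ?_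
  rintro ⟨x⟩ ⟨-, hx⟩ ⟨y⟩ ⟨-, hy⟩ hxy
  rcases hr' x y (Quot.eqvGen_exact hxy) with h | ⟨hxa | hxb, hya | hyb⟩
  · exact h
  · exact hxa.trans hya.symm
  all_goals simp_all [q]

end Quot

theorem bracket_weight_eq_tutte_weight {K : Type} [Field K] (μ A B : K) (hA : A ≠ 0) (hB : B ≠ 0)
    {n m k p P : ℕ} (hk : k ≤ m) (hP : P ≤ p) (hp : p ≤ n) (hn : n ≤ k + p) (hnE : n ≤ m + P) :
    μ ^ (p + (k + p - n)) * A ^ (m - k) * B ^ k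
      = μ ^ P * A ^ (m + P - n) * B ^ (n - P)
          * ((μ * A / B) ^ (p - P) * (μ * B / A) ^ (k + p - n)) := by
  have key : μ ^ (p + (k + p - n)) * A ^ (m - k) * B ^ k * (B ^ (p - P) * A ^ (k + p - n))
      = μ ^ P * A ^ (m + P - n) * B ^ (n - P) * ((μ * A) ^ (p - P) * (μ * B) ^ (k + p - n)) :=
    calc _ = μ ^ (p + (k + p - n)) * A ^ (m - k + (k + p - n)) * B ^ (k + (p - P)) := by ring
      _ = μ ^ (P + (p - P) + (k + p - n)) * A ^ (m + P - n + (p - P))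
            * B ^ (n - P + (k + p - n)) := by
          rw [show p + (k + p - n) = P + (p - P) + (k + p - n) by omega,
            show m - k + (k + p - n) = m + P - n + (p - P) by omega,
            show k + (p - P) = n - P + (k + p - n) by omega]
      _ = _ := by ring
  rw [div_pow, div_pow]
  field_simp
  linear_combination key

namespace MGraph

variable (G : MGraph)

theorem p0_le_card (s : Finset G.E) : G.p0 s ≤ Nat.card G.V :=
  Quot.card_le _

theorem p0_antitone : Antitone G.p0 := fun _ _ hst =>
  Quot.card_le_card_of_le fun _ _ ⟨e, he, hve⟩ => ⟨e, hst he, hve⟩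

theorem p0_empty : G.p0 ∅ = Nat.card G.V :=
  Quot.card_eq_of_forall_not (by simp)

theorem p0_le_p0_insert_add_one (s : Finset G.E) (e : G.E) :
    G.p0 s ≤ G.p0 (insert e s) + 1 := by
  have hrel : (fun v w : G.V => ∃ e' ∈ insert e s, G.ends e' = s(v, w)) =
      fun v w => G.ends e = s(v, w) ∨ ∃ e' ∈ s, G.ends e' = s(v, w) := by
    simp only [Finset.exists_mem_insert]
  unfold p0
  rw [hrel]
  exact Quot.card_le_card_or_sym2_add_one _ _

theorem card_le_card_add_p0 (s : Finset G.E) : Nat.card G.V ≤ s.card + G.p0 s := by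
  induction s using Finset.induction_on with
  | empty => simp [p0_empty]
  | insert e s he ih =>
    rw [Finset.card_insert_of_notMem he]
    linarith [G.p0_le_p0_insert_add_one s e]

end MGraph

/-- the Kauffman bracket of a graph and the Tutte polynomial satisfy
`[G]_{(μ,A,B)} = μ^{p₀(G)} A^{p₁(G)} B^{|E|-p₁(G)} χ(G; (B+μA)/B, (A+μB)/A)`
(in the rational function field `ℚ(μ,A,B)`, equivalently for any field elements with
`A ≠ 0`, `B ≠ 0`; note `|E| - p₁(G) = |V| - p₀(G)`). -/
theorem stmt_7 {K : Type} [Field K] (μ A B : K) (hA : A ≠ 0) (hB : B ≠ 0)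
    (G : MGraph) :
    G.kb μ A B
      = μ ^ (G.p0 Finset.univ) * A ^ (G.p1 Finset.univ)
          * B ^ (Nat.card G.V - G.p0 Finset.univ)
          * G.tutte ((B + μ * A) / B) ((A + μ * B) / A) := by
  have hx : (B + μ * A) / B - 1 = μ * A / B := by field_simp; ring
  have hy : (A + μ * B) / A - 1 = μ * B / A := by field_simp; ring
  rw [MGraph.kb, MGraph.tutte, hx, hy, Finset.mul_sum]
  exact Finset.sum_congr rfl fun s _ =>
    bracket_weight_eq_tutte_weight μ A B hA hB (Finset.card_le_univ s)
      (G.p0_antitone (Finset.subset_univ s)) (G.p0_le_card s) (G.card_le_card_add_p0 s)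
      (G.card_le_card_add_p0 Finset.univ)
end

section
/- For a finite graph G, the chromatic polynomial satisfies the state sum (Whitney rank) formula χ_G(λ) = Σ_{s ⊆ E(G)} (−1)^{|s|} λ^{k(s)}, where k(s) is the number of connected components of the spanning subgraph [G:s]. -/
open scoped Classical

lemma count_compatible {V : Type} [Fintype V] (n : ℕ) (s : Finset (Sym2 V)) :
    Nat.card {f : V → Fin n // ∀ v w, s(v, w) ∈ s → f v = f w}
      = n ^ (Nat.card (Quot fun v w : V => s(v, w) ∈ s)) := by
  set r : V → V → Prop := fun v w => s(v, w) ∈ s with hr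
  have : Finite (Quot r) := Finite.of_surjective (Quot.mk r) Quot.mk_surjective
  have e : {f : V → Fin n // ∀ v w, r v w → f v = f w} ≃ (Quot r → Fin n) :=
    { toFun := fun f => Quot.lift f.1 f.2
      invFun := fun g => ⟨fun v => g (Quot.mk r v),
        fun v w h => by exact congrArg g (Quot.sound h)⟩
      left_inv := fun f => rfl
      right_inv := fun g => funext fun q => by
        induction q using Quot.ind with
        | _ v => rfl }
  rw [Nat.card_congr e, Nat.card_fun, Nat.card_eq_fintype_card, Fintype.card_fin]

/-- the Whitney rank state sum for the chromatic polynomial: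
if `P` satisfies `P(n) = #\{proper n-colorings of G\}` for all `n`, then
`P = Σ_{s ⊆ E(G)} (-1)^{|s|} λ^{k(s)}`, where `k(s)` is the number of connected
components of the spanning subgraph `[G:s]` (components = `Quot` of the relation
"joined by an edge of `s`"). -/
theorem stmt_8 {V : Type} [Fintype V] [DecidableEq V] (G : SimpleGraph V)
    (P : Polynomial ℤ)
    (hP : ∀ n : ℕ, P.eval (n : ℤ)
      = Nat.card {f : V → Fin n // ∀ u w, G.Adj u w → f u ≠ f w}) :
    P = ∑ s ∈ G.edgeFinset.powerset,
        (-1 : Polynomial ℤ) ^ s.card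
          * Polynomial.X ^ (Nat.card (Quot fun v w : V => s(v, w) ∈ s)) := by
  classical
  set Q : Polynomial ℤ := ∑ s ∈ G.edgeFinset.powerset,
        (-1 : Polynomial ℤ) ^ s.card
          * Polynomial.X ^ (Nat.card (Quot fun v w : V => s(v, w) ∈ s)) with hQ
  have key : ∀ n : ℕ, Q.eval (n : ℤ)
      = Nat.card {f : V → Fin n // ∀ u w, G.Adj u w → f u ≠ f w} := by
    intro n
    set E := G.edgeFinset with hE
    -- monochromatic edges of f
    set M : (V → Fin n) → Finset (Sym2 V) :=
      fun f => E.filter (fun e => ∀ v ∈ e, ∀ w ∈ e, f v = f w) with hM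
    have hMsub : ∀ f, M f ⊆ E := fun f => Finset.filter_subset _ _
    have evalQ : Q.eval (n : ℤ) = ∑ s ∈ E.powerset,
        (-1 : ℤ) ^ s.card * (n : ℤ) ^ (Nat.card (Quot fun v w : V => s(v, w) ∈ s)) := by
      simp [hQ, Polynomial.eval_finset_sum]
    -- compatibility with s ↔ s ⊆ M f
    have hsub : ∀ s : Finset (Sym2 V), s ∈ E.powerset → ∀ f : V → Fin n,
        (∀ v w, s(v, w) ∈ s → f v = f w) ↔ s ⊆ M f := by
      intro s hs f
      rw [Finset.mem_powerset] at hs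
      constructor
      · intro h e he
        rw [hM, Finset.mem_filter]
        refine ⟨hs he, ?_⟩
        induction e using Sym2.ind with
        | _ a b =>
          intro v hv w hw
          rw [Sym2.mem_iff] at hv hw
          have hab : f a = f b := h a b he
          rcases hv with rfl | rfl <;> rcases hw with rfl | rfl
          · rfl
          · exact hab
          · exact hab.symm
          · rfl
      · intro h v w hvw
        have := h hvw
        rw [hM, Finset.mem_filter] at this
        exact this.2 v (by simp) w (by simp)
    have hcard : ∀ s : Finset (Sym2 V), s ∈ E.powerset →
        ((n : ℤ)) ^ (Nat.card (Quot fun v w : V => s(v, w) ∈ s))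
          = ((Finset.univ.filter (fun f : V → Fin n => s ⊆ M f)).card : ℤ) := by
      intro s hs
      have h1 : (Finset.univ.filter (fun f : V → Fin n => s ⊆ M f)).card
          = Nat.card {f : V → Fin n // s ⊆ M f} := by
        rw [Nat.card_eq_fintype_card, Fintype.card_subtype]
      have h2 : Nat.card {f : V → Fin n // s ⊆ M f}
          = Nat.card {f : V → Fin n // ∀ v w, s(v, w) ∈ s → f v = f w} :=
        Nat.card_congr (Equiv.subtypeEquivRight fun f => (hsub s hs f).symm)
      rw [h1, h2, count_compatible]
      push_cast
      rfl
    rw [evalQ, Finset.sum_congr rfl (fun s hs => by rw [hcard s hs])]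
    have swap : ∑ s ∈ E.powerset, (-1 : ℤ) ^ s.card
          * ((Finset.univ.filter (fun f : V → Fin n => s ⊆ M f)).card : ℤ)
        = ∑ f : V → Fin n, ∑ s ∈ E.powerset, (if s ⊆ M f then (-1 : ℤ) ^ s.card else 0) := by
      rw [Finset.sum_comm]
      refine Finset.sum_congr rfl fun s _ => ?_
      rw [Finset.card_filter]
      push_cast
      rw [Finset.mul_sum]
      exact Finset.sum_congr rfl fun f _ => by by_cases h : s ⊆ M f <;> simp [h]
    rw [swap]
    have inner : ∀ f : V → Fin n,
        (∑ s ∈ E.powerset, (if s ⊆ M f then (-1 : ℤ) ^ s.card else 0))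
          = if M f = ∅ then 1 else 0 := by
      intro f
      rw [← Finset.sum_filter]
      have : E.powerset.filter (fun s => s ⊆ M f) = (M f).powerset := by
        ext s
        simp only [Finset.mem_filter, Finset.mem_powerset]
        exact ⟨fun h => h.2, fun h => ⟨h.trans (hMsub f), h⟩⟩
      rw [this, Finset.sum_powerset_neg_one_pow_card]
    rw [Finset.sum_congr rfl fun f _ => inner f]
    have proper : ∀ f : V → Fin n, M f = ∅ ↔ (∀ u w, G.Adj u w → f u ≠ f w) := by
      intro f
      constructor
      · intro h u w hadj hfe
        have hmem : s(u, w) ∈ M f := by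
          rw [hM, Finset.mem_filter]
          refine ⟨SimpleGraph.mem_edgeFinset.2 hadj, ?_⟩
          intro v hv x hx
          rw [Sym2.mem_iff] at hv hx
          rcases hv with rfl | rfl <;> rcases hx with rfl | rfl
          · rfl
          · exact hfe
          · exact hfe.symm
          · rfl
        rw [h] at hmem
        exact absurd hmem (Finset.notMem_empty _)
      · intro h
        rw [Finset.eq_empty_iff_forall_notMem]
        intro e he
        rw [hM, Finset.mem_filter] at he
        induction e using Sym2.ind with
        | _ a b =>
          have hadj : G.Adj a b := SimpleGraph.mem_edgeFinset.1 he.1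
          exact h a b hadj (he.2 a (by simp) b (by simp))
    have final : Nat.card {f : V → Fin n // ∀ u w, G.Adj u w → f u ≠ f w}
        = (Finset.univ.filter (fun f : V → Fin n => M f = ∅)).card := by
      rw [Nat.card_eq_fintype_card, Fintype.card_subtype]
      congr 1
      exact Finset.filter_congr fun f _ => (proper f).symm
    rw [final, Finset.card_filter]
    push_cast
    exact Finset.sum_congr rfl fun f _ => by by_cases h : M f = ∅ <;> simp [h]
  apply Polynomial.eq_of_infinite_eval_eq
  apply Set.Infinite.mono (s := Set.range (Nat.cast : ℕ → ℤ))
  · rintro x ⟨n, rfl⟩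
    simp only [Set.mem_setOf_eq, hP n, key n]
  · exact Set.infinite_range_of_injective Nat.cast_injective
end
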